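/- In a DFS tree T of a connected undirected graph G, a tree edge (x,y) with x = parent(y) is a bridge of G if and only if the high-point of y equals dfn(y). -/

import Mathlib

/-
The DFS property makes every edge join an ancestor and a descendant, so a non-tree edge leaving
the subtree of `y` must be a back edge to a proper ancestor of `y`; such an edge exists exactly
when the high-point of `y` lies below `dfn y`, because dfn strictly increases down the tree.
If it exists, tree paths inside and outside the subtree of `y` together with that back edge
reconnect `y` to its parent `x`. If it does not, the subtree of `y` is closed under the
remaining edges, so deleting `xy` cuts it off.
-/

open Classical Finset

structure RTree (V : Type*) where
  parent : V → V
  root : V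
  parent_root : parent root = root
  reaches : ∀ v : V, ∃ k : ℕ, parent^[k] v = root

namespace RTree

variable {V : Type*}

/-- `u` is an ancestor of `v` (or `u = v`) in the rooted tree `T`. -/
def IsAncestor (T : RTree V) (u v : V) : Prop :=
  ∃ k : ℕ, T.parent^[k] v = u

/-- depth of a vertex: distance (number of edges) from the root. -/
noncomputable def depth (T : RTree V) (v : V) : ℕ :=
  Nat.find (T.reaches v)

/-- number of vertices in the subtree rooted at `v`. -/
noncomputable def subtreeSize [Fintype V] (T : RTree V) (v : V) : ℕ :=
  (Finset.univ.filter fun u => T.IsAncestor v u).card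

end RTree

/-- A heavy-light decomposition of a rooted tree: `heavy c` means the edge
from `parent c` to `c` is marked heavy (solid). -/
structure HLDecomp {V : Type*} [Fintype V] (T : RTree V) where
  heavy : V → Prop
  heavy_ne_root : ∀ c, heavy c → c ≠ T.root
  heavy_max : ∀ c c', heavy c → T.parent c' = T.parent c → c' ≠ T.parent c' →
      T.subtreeSize c' ≤ T.subtreeSize c
  heavy_exists : ∀ u : V, (∃ c, T.parent c = u ∧ c ≠ u) → ∃ c, T.parent c = u ∧ c ≠ u ∧ heavy c
  heavy_unique : ∀ c c', heavy c → heavy c' → T.parent c = T.parent c' → c = c'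

/-- number of light (dashed) edges on the tree path from the root to `v`. -/
noncomputable def lightCount {V : Type*} [Fintype V] (T : RTree V) (H : HLDecomp T) (v : V) : ℕ :=
  (Finset.univ.filter fun u => T.IsAncestor u v ∧ u ≠ T.root ∧ ¬ H.heavy u).card

/-- The high-point of a vertex `c`: the minimum dfn among `dfn c` and the dfn's of proper
ancestors reached by back edges (non-tree edges of `G`) from vertices in the subtree of
`c`. -/
noncomputable def highPoint {n : ℕ} (G : SimpleGraph (Fin n)) (T : RTree (Fin n))
    (ord : Fin n ≃ Fin n) (c : Fin n) : WithTop ℕ :=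
  ((Finset.univ.filter fun w => w = c ∨
      ∃ u : Fin n, T.IsAncestor c u ∧ G.Adj u w ∧ T.IsAncestor w u ∧ w ≠ u ∧
        T.parent u ≠ w).image fun w => (ord w : ℕ)).min

namespace RTree

variable {V : Type*} (T : RTree V)

def IsBackEdge (G : SimpleGraph V) (u w : V) : Prop :=
  G.Adj u w ∧ T.IsAncestor w u ∧ w ≠ u ∧ T.parent u ≠ w

lemma isAncestor_refl (v : V) : T.IsAncestor v v := ⟨0, rfl⟩

lemma IsAncestor.trans {T : RTree V} {a b c : V} (hab : T.IsAncestor a b)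
    (hbc : T.IsAncestor b c) : T.IsAncestor a c := by
  obtain ⟨k, rfl⟩ := hab
  obtain ⟨m, rfl⟩ := hbc
  exact ⟨k + m, Function.iterate_add_apply _ _ _ _⟩

lemma isAncestor_parent_self (v : V) : T.IsAncestor (T.parent v) v := ⟨1, rfl⟩

lemma IsAncestor.isAncestor_parent {T : RTree V} {a v : V} (h : T.IsAncestor a v)
    (hne : a ≠ v) : T.IsAncestor a (T.parent v) := by
  obtain ⟨_ | k, rfl⟩ := h
  · exact absurd rfl hne
  · exact ⟨k, rfl⟩

lemma iterate_parent_root (k : ℕ) : T.parent^[k] T.root = T.root :=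
  Function.iterate_fixed T.parent_root k

lemma eq_root_of_isAncestor_root {a : V} (h : T.IsAncestor a T.root) : a = T.root := by
  obtain ⟨k, rfl⟩ := h
  exact T.iterate_parent_root k

lemma IsAncestor.total_of_isAncestor {T : RTree V} {a b c : V} (hac : T.IsAncestor a c)
    (hbc : T.IsAncestor b c) : T.IsAncestor a b ∨ T.IsAncestor b a := by
  obtain ⟨k, rfl⟩ := hac
  obtain ⟨m, rfl⟩ := hbc
  rcases le_total k m with h | h
  · exact .inr ⟨m - k, by rw [← Function.iterate_add_apply, Nat.sub_add_cancel h]⟩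
  · exact .inl ⟨k - m, by rw [← Function.iterate_add_apply, Nat.sub_add_cancel h]⟩

lemma reachable_of_isAncestor (H : SimpleGraph V) {a v : V} (hav : T.IsAncestor a v)
    (hadj : ∀ z, T.IsAncestor a z → T.IsAncestor z v → z ≠ a → H.Adj (T.parent z) z) :
    H.Reachable a v := by
  obtain ⟨k, hk⟩ := hav
  induction k generalizing v with
  | zero => exact hk ▸ .rfl
  | succ k ih =>
    by_cases hva : v = a
    · exact hva ▸ .rfl
    have hpv : T.IsAncestor (T.parent v) v := T.isAncestor_parent_self v
    refine (ih (fun z haz hzp hza => hadj z haz (hzp.trans hpv) hza) hk).trans ?_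
    exact (hadj v ⟨k + 1, hk⟩ (T.isAncestor_refl v) hva).reachable

end RTree

lemma SimpleGraph.Reachable.of_forall_adj_imp {V : Type*} {H : SimpleGraph V} {P : V → Prop}
    (hP : ∀ a b, H.Adj a b → P a → P b) {a b : V} (h : H.Reachable a b) (ha : P a) : P b := by
  obtain ⟨p⟩ := h
  induction p with
  | nil => exact ha
  | cons hadj _ ih => exact ih (hP _ _ hadj ha)

section DeleteTreeEdge

variable {V : Type*} {G : SimpleGraph V} {T : RTree V} {y : V}

lemma deleteEdges_adj_parent (hspan : ∀ v, v ≠ T.root → G.Adj (T.parent v) v)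
    (hy : ¬ T.IsAncestor y (T.parent y)) {z : V} (hz : z ≠ T.root) (hzy : z ≠ y) :
    (G.deleteEdges {s(T.parent y, y)}).Adj (T.parent z) z := by
  refine SimpleGraph.deleteEdges_adj.2 ⟨hspan z hz, ?_⟩
  rw [Set.mem_singleton_iff, Sym2.eq_iff]
  rintro (⟨-, rfl⟩ | ⟨hpz, rfl⟩)
  · exact hzy rfl
  · exact hy ⟨1, hpz⟩

lemma reachable_deleteEdges_of_isBackEdge (hspan : ∀ v, v ≠ T.root → G.Adj (T.parent v) v)
    (hy : ¬ T.IsAncestor y (T.parent y)) {u w : V} (hyu : T.IsAncestor y u)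
    (hback : T.IsBackEdge G u w) (hw : T.IsAncestor w (T.parent y)) :
    (G.deleteEdges {s(T.parent y, y)}).Reachable (T.parent y) y := by
  obtain ⟨huw, hwu, -, hpu⟩ := hback
  have ne_root {a z : V} (haz : T.IsAncestor a z) (hza : z ≠ a) : z ≠ T.root := by
    rintro rfl
    exact hza (T.eq_root_of_isAncestor_root haz).symm
  have down : (G.deleteEdges {s(T.parent y, y)}).Reachable y u :=
    T.reachable_of_isAncestor _ hyu fun z hyz _ hzy =>
      deleteEdges_adj_parent hspan hy (ne_root hyz hzy) hzy
  have up : (G.deleteEdges {s(T.parent y, y)}).Reachable w (T.parent y) :=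
    T.reachable_of_isAncestor _ hw fun z hwz hzp hzw =>
      deleteEdges_adj_parent hspan hy (ne_root hwz hzw) (by rintro rfl; exact hy hzp)
  have back : (G.deleteEdges {s(T.parent y, y)}).Adj u w := by
    refine SimpleGraph.deleteEdges_adj.2 ⟨huw, ?_⟩
    rw [Set.mem_singleton_iff, Sym2.eq_iff]
    rintro (⟨rfl, -⟩ | ⟨rfl, rfl⟩)
    · exact hy hyu
    · exact hpu rfl
  exact (down.trans (back.reachable.trans up)).symm

lemma isAncestor_of_deleteEdges_adj
    (hdfsProp : ∀ a b, G.Adj a b → T.IsAncestor a b ∨ T.IsAncestor b a)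
    (hno : ¬ ∃ u w, T.IsAncestor y u ∧ T.IsBackEdge G u w ∧ T.IsAncestor w (T.parent y))
    {a b : V} (hab : (G.deleteEdges {s(T.parent y, y)}).Adj a b) (hya : T.IsAncestor y a) :
    T.IsAncestor y b := by
  obtain ⟨hGab, hab⟩ := SimpleGraph.deleteEdges_adj.1 hab
  by_contra hyb
  rcases hdfsProp a b hGab with hba | hba
  · exact hyb (hya.trans hba)
  rcases hya.total_of_isAncestor hba with hyb' | hby
  · exact hyb hyb'
  have hpab : T.parent a ≠ b := by
    rintro rfl
    by_cases hay : a = y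
    · exact hab (Set.mem_singleton_iff.2 (hay ▸ Sym2.eq_swap))
    · exact hyb (hya.isAncestor_parent (Ne.symm hay))
  refine hno ⟨a, b, hya, ⟨hGab, hba, hGab.ne', hpab⟩, hby.isAncestor_parent ?_⟩
  rintro rfl
  exact hyb (T.isAncestor_refl _)

theorem connected_deleteEdges_iff_exists_isBackEdge (hG : G.Connected)
    (hspan : ∀ v, v ≠ T.root → G.Adj (T.parent v) v)
    (hdfsProp : ∀ a b, G.Adj a b → T.IsAncestor a b ∨ T.IsAncestor b a)
    (hy : ¬ T.IsAncestor y (T.parent y)) :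
    (G.deleteEdges {s(T.parent y, y)}).Connected ↔
      ∃ u w, T.IsAncestor y u ∧ T.IsBackEdge G u w ∧ T.IsAncestor w (T.parent y) := by
  constructor
  · intro hconn
    by_contra hno
    exact hy <| (hconn.preconnected y (T.parent y)).of_forall_adj_imp
      (fun _ _ hab => isAncestor_of_deleteEdges_adj hdfsProp hno hab) (T.isAncestor_refl y)
  · rintro ⟨u, w, hyu, hback, hw⟩
    refine hG.connected_delete_edge_of_not_isBridge ?_
    rw [SimpleGraph.isBridge_iff, not_not]
    exact reachable_deleteEdges_of_isBackEdge hspan hy hyu hback hw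

end DeleteTreeEdge

section DFSNumbering

variable {n : ℕ} {T : RTree (Fin n)} {ord : Fin n ≃ Fin n}

/-- The vertex numbered `j + 1` hangs below the tree path to the vertex numbered `j`, so a proper
ancestor of `v` is an ancestor of the vertex numbered `dfn v - 1`; induct on `dfn v`. -/
lemma dfn_lt_of_isAncestor (hroot : (ord T.root : ℕ) = 0)
    (hdfs : ∀ i j : Fin n, (i : ℕ) = (j : ℕ) + 1 →
      T.IsAncestor (T.parent (ord.symm i)) (ord.symm j))
    {a v : Fin n} (hav : T.IsAncestor a v) (hne : a ≠ v) : (ord a : ℕ) < ord v := by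
  induction hv : (ord v : ℕ) using Nat.strong_induction_on generalizing v with
  | _ j ih =>
    cases j with
    | zero =>
      have hv_root : v = T.root := ord.injective (Fin.ext (by omega))
      exact absurd (T.eq_root_of_isAncestor_root (hv_root ▸ hav)) (hv_root ▸ hne)
    | succ m =>
      obtain ⟨u, hu⟩ : ∃ u, (ord u : ℕ) = m := ⟨ord.symm ⟨m, by omega⟩, by simp⟩
      have hpu : T.IsAncestor (T.parent v) u := by
        simpa using hdfs (ord v) (ord u) (by omega)
      have hau : T.IsAncestor a u := (hav.isAncestor_parent hne).trans hpu
      by_cases hau' : a = u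
      · rw [hau']
        omega
      · have := ih m (by omega) hau hau' hu
        omega

lemma dfn_le_of_isAncestor (hdfn : ∀ a v, T.IsAncestor a v → a ≠ v → (ord a : ℕ) < ord v)
    {a v : Fin n} (hav : T.IsAncestor a v) : (ord a : ℕ) ≤ ord v := by
  by_cases hne : a = v
  · rw [hne]
  · exact (hdfn a v hav hne).le

lemma highPoint_eq_dfn_iff_forall (G : SimpleGraph (Fin n)) (c : Fin n) :
    highPoint G T ord c = ((ord c : ℕ) : WithTop ℕ) ↔
      ∀ u w, T.IsAncestor c u → T.IsBackEdge G u w → (ord c : ℕ) ≤ ord w := by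
  refine ⟨fun h u w hcu hback => ?_, fun h => le_antisymm ?_ ?_⟩
  · have hmin : highPoint G T ord c ≤ ((ord w : ℕ) : WithTop ℕ) :=
      Finset.min_le (Finset.mem_image_of_mem _
        (Finset.mem_filter.2 ⟨Finset.mem_univ w, Or.inr ⟨u, hcu, hback⟩⟩))
    rw [h] at hmin
    exact WithTop.coe_le_coe.1 hmin
  · exact Finset.min_le (Finset.mem_image_of_mem _
      (Finset.mem_filter.2 ⟨Finset.mem_univ c, Or.inl rfl⟩))
  · refine Finset.le_min fun _ hb => ?_
    obtain ⟨w, hw, rfl⟩ := Finset.mem_image.1 hb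
    rcases (Finset.mem_filter.1 hw).2 with rfl | ⟨u, hcu, hback⟩
    · exact le_rfl
    · exact WithTop.coe_le_coe.2 (h u w hcu hback)

lemma highPoint_eq_dfn_iff (G : SimpleGraph (Fin n))
    (hdfn : ∀ a v, T.IsAncestor a v → a ≠ v → (ord a : ℕ) < ord v) {y : Fin n}
    (hy : T.parent y ≠ y) :
    highPoint G T ord y = ((ord y : ℕ) : WithTop ℕ) ↔
      ¬ ∃ u w, T.IsAncestor y u ∧ T.IsBackEdge G u w ∧ T.IsAncestor w (T.parent y) := by
  rw [highPoint_eq_dfn_iff_forall]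
  simp only [not_exists, not_and]
  refine forall₂_congr fun u w => imp_congr_right fun hyu => imp_congr_right fun hback => ?_
  constructor
  · intro hle hw
    have := dfn_le_of_isAncestor hdfn hw
    have := hdfn _ _ (T.isAncestor_parent_self y) hy
    omega
  · intro hw
    rcases hyu.total_of_isAncestor hback.2.1 with hyw | hwy
    · exact dfn_le_of_isAncestor hdfn hyw
    · by_cases hwy' : w = y
      · rw [hwy']
      · exact absurd (hwy.isAncestor_parent hwy') hw

end DFSNumbering

/-- In a DFS tree `T` of a connected undirected graph `G`, a tree edge
`(x, y)` with `x = parent y` is a bridge of `G` (its removal disconnects `G`) if and only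
if the high-point of `y` equals `dfn y`. -/
theorem bridge_iff_highpoint {n : ℕ} (G : SimpleGraph (Fin n)) (hG : G.Connected)
    (T : RTree (Fin n)) (ord : Fin n ≃ Fin n)
    (hroot : (ord T.root : ℕ) = 0)
    (hspan : ∀ v : Fin n, v ≠ T.root → G.Adj (T.parent v) v)
    (hdfs : ∀ i j : Fin n, (i : ℕ) = (j : ℕ) + 1 →
      T.IsAncestor (T.parent (ord.symm i)) (ord.symm j))
    (hdfsProp : ∀ a b : Fin n, G.Adj a b → T.IsAncestor a b ∨ T.IsAncestor b a)
    (x y : Fin n) (hxy : T.parent y = x) (hyx : y ≠ x) :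
    ¬ (G.deleteEdges {s(x, y)}).Connected ↔
      highPoint G T ord y = ((ord y : ℕ) : WithTop ℕ) := by
  subst hxy
  have hdfn : ∀ a v, T.IsAncestor a v → a ≠ v → (ord a : ℕ) < ord v :=
    fun _ _ => dfn_lt_of_isAncestor hroot hdfs
  have hy : ¬ T.IsAncestor y (T.parent y) := fun h =>
    absurd (hdfn _ _ h hyx) (hdfn _ _ (T.isAncestor_parent_self y) (Ne.symm hyx)).asymm
  rw [highPoint_eq_dfn_iff G hdfn (Ne.symm hyx),
    connected_deleteEdges_iff_exists_isBackEdge hG hspan hdfsProp hy]
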